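/- Let 0 < s, t < 1 and let c > 0. Then (1/(2π)) ∫_{-∞}^{∞} |Γ(c/2 + iα)|² / Γ(c) · e^{-i ln(t/s) α} dα = ( (1/2) sech( ln(t/s)/2 ) )^c = ( √(st)/(s+t) )^c. -/

import Mathlib

/-!
Substituting `u = log (y / (1 - y))` turns `∫ e^{iαu} (2 cosh (u/2))^{-c} du` into the Beta
integral `B(c/2 + iα, c/2 - iα) = |Γ(c/2 + iα)|² / Γ(c)`, so the integrand of the theorem is the
Fourier transform of `u ↦ ((1/2) sech (u/2))^c` in the angular convention. This transform is
nonnegative, and a continuous integrable function with nonnegative Fourier transform has an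
integrable Fourier transform: damp it by Gaussians `e^{-‖w‖²/c}`, whose integrals tend to `f 0`,
and apply Fatou's lemma. Fourier inversion at `u = log (t/s)` then gives the first identity; the
second is `(e^{(a+b)/2}) / (e^a + e^b) = 1 / (2 cosh ((a-b)/2))` with `a = log t`, `b = log s`.
-/

open Complex MeasureTheory Filter Topology Set
open scoped FourierTransform ComplexOrder

section GaussianDamping

variable {V : Type*} [NormedAddCommGroup V] [InnerProductSpace ℝ V]
  [MeasurableSpace V] [BorelSpace V] [FiniteDimensional ℝ V]

theorem integrable_ofReal_exp_neg_inv_mul_sq_norm {c : ℝ} (hc : 0 < c) :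
    Integrable (fun w : V ↦ (Real.exp (-c⁻¹ * ‖w‖ ^ 2) : ℂ)) := by
  have hb : 0 < ((c : ℂ)⁻¹).re := by simpa using hc
  simpa using GaussianFourier.integrable_cexp_neg_mul_sq_norm_add hb 0 (0 : V)

theorem lintegral_enorm_eq_enorm_integral_of_nonneg {α : Type*} [MeasurableSpace α]
    {μ : Measure α} {h : α → ℂ} (hi : Integrable h μ) (hpos : ∀ x, 0 ≤ h x) :
    ∫⁻ x, ‖h x‖ₑ ∂μ = ‖∫ x, h x ∂μ‖ₑ := by
  have hnorm : ((∫ x, ‖h x‖ ∂μ : ℝ) : ℂ) = ∫ x, h x ∂μ := by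
    refine (integral_ofReal (𝕜 := ℂ)).symm.trans ?_
    exact integral_congr_ae (ae_of_all _ fun x ↦ Complex.norm_of_nonneg' (hpos x))
  rw [← ofReal_integral_norm_eq_lintegral_enorm hi, ← hnorm, ← ofReal_norm,
    Complex.norm_of_nonneg (integral_nonneg fun x ↦ norm_nonneg _)]

theorem tendsto_integral_gaussian_mul_fourier {f : V → ℂ} (hf : Integrable f)
    (h0 : ContinuousAt f 0) :
    Tendsto (fun c : ℝ ↦ ∫ w, (Real.exp (-c⁻¹ * ‖w‖ ^ 2) : ℂ) * 𝓕 f w) atTop (𝓝 (f 0)) := by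
  apply (Real.tendsto_integral_gaussian_smul' hf h0).congr'
  filter_upwards [Ioi_mem_atTop 0] with c (hc : 0 < c)
  have hb : 0 < ((c : ℂ)⁻¹).re := by simpa using hc
  have hG : Integrable (fun w : V ↦ cexp (-(c : ℂ)⁻¹ * ‖w‖ ^ 2)) := by
    simpa using integrable_ofReal_exp_neg_inv_mul_sq_norm (V := V) hc
  have hflip : (innerₗ V).flip = innerₗ V := by ext; simp
  have hself := VectorFourier.integral_fourierIntegral_smul_eq_flip (L := innerₗ V)
    Real.continuous_fourierChar continuous_inner hG hf
  rw [hflip] at hself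
  change ∫ ξ, 𝓕 (fun w : V ↦ cexp (-(c : ℂ)⁻¹ * ‖w‖ ^ 2)) ξ • f ξ = ∫ x, _ • 𝓕 f x at hself
  simp only [fourier_gaussian_innerProductSpace hb, smul_eq_mul] at hself
  refine (Eq.trans ?_ hself).trans ?_
  · congr 1 with w
    simp only [zero_sub, norm_neg, div_inv_eq_mul, smul_eq_mul]
    ring_nf
  · push_cast
    rfl

theorem integrable_fourier_of_nonneg {f : V → ℂ} (hf : Integrable f) (h0 : ContinuousAt f 0)
    (hpos : ∀ w, 0 ≤ 𝓕 f w) : Integrable (𝓕 f) := by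
  set G : ℝ → V → ℂ := fun c w ↦ (Real.exp (-c⁻¹ * ‖w‖ ^ 2) : ℂ) * 𝓕 f w
  have hcont : Continuous (𝓕 f) :=
    VectorFourier.fourierIntegral_continuous Real.continuous_fourierChar continuous_inner hf
  have hG_cont (c : ℝ) : Continuous (G c) := by fun_prop
  have hG_pos (c : ℝ) (w : V) : 0 ≤ G c w :=
    mul_nonneg (mod_cast (Real.exp_pos _).le) (hpos w)
  have hG_tendsto (w : V) : Tendsto (fun c ↦ G c w) atTop (𝓝 (𝓕 f w)) := by
    have hexp : Tendsto (fun c : ℝ ↦ Real.exp (-c⁻¹ * ‖w‖ ^ 2)) atTop (𝓝 1) := by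
      simpa using (tendsto_inv_atTop_zero.neg.mul_const (‖w‖ ^ 2)).rexp
    simpa [G] using (continuous_ofReal.tendsto 1 |>.comp hexp).mul_const (𝓕 f w)
  have hG_int : ∀ᶠ c in atTop, ∫⁻ w, ‖G c w‖ₑ ≤ ‖∫ w, G c w‖ₑ := by
    filter_upwards [Ioi_mem_atTop 0] with c (hc : 0 < c)
    refine (lintegral_enorm_eq_enorm_integral_of_nonneg ?_ (hG_pos c)).le
    exact (integrable_ofReal_exp_neg_inv_mul_sq_norm hc).mul_bdd hcont.aestronglyMeasurable
      (ae_of_all _ fun w ↦ VectorFourier.norm_fourierIntegral_le_integral_norm _ _ _ _ _)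
  refine ⟨hcont.aestronglyMeasurable, ?_⟩
  calc ∫⁻ w, ‖𝓕 f w‖ₑ = ∫⁻ w, liminf (fun c ↦ ‖G c w‖ₑ) atTop := by
        congr with w; exact ((hG_tendsto w).enorm.liminf_eq).symm
    _ ≤ liminf (fun c ↦ ∫⁻ w, ‖G c w‖ₑ) atTop :=
        lintegral_liminf_le' fun c ↦ (hG_cont c).aemeasurable.enorm
    _ ≤ liminf (fun c ↦ ‖∫ w, G c w‖ₑ) atTop := liminf_le_liminf hG_int
    _ = ‖f 0‖ₑ := (tendsto_integral_gaussian_mul_fourier hf h0).enorm.liminf_eq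
    _ < ⊤ := enorm_lt_top

end GaussianDamping

theorem integral_fourier_neg_div_two_pi_mul_cexp {f : ℝ → ℂ} (hf : Integrable f)
    (hF : Integrable (𝓕 f)) {x : ℝ} (hx : ContinuousAt f x) :
    (1 / (2 * Real.pi) : ℂ) * ∫ α : ℝ, 𝓕 f (-α / (2 * Real.pi)) * cexp (-I * x * α) = f x := by
  set ψ : ℝ → ℂ := fun v ↦ cexp (↑(2 * Real.pi * v * x) * I) • 𝓕 f v
  have hπ : (Real.pi : ℂ) ≠ 0 := ofReal_ne_zero.2 Real.pi_ne_zero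
  have hψ (α : ℝ) : 𝓕 f (-α / (2 * Real.pi)) * cexp (-I * x * α)
      = ψ (-(2 * Real.pi)⁻¹ * α) := by
    simp only [ψ, smul_eq_mul]
    rw [mul_comm]
    congr 2
    · push_cast
      field_simp
    · exact congrArg (𝓕 f) (by ring)
  have hinv : 𝓕⁻ (𝓕 f) x = ∫ v, ψ v := by
    simp only [Real.fourierInv_eq', ψ]
    congr 1 with v
    simp only [RCLike.inner_apply, conj_trivial, mul_comm x, mul_assoc]
  simp_rw [hψ]
  rw [Measure.integral_comp_mul_left, ← hinv, hf.fourierInv_fourier_eq hF hx, inv_neg, inv_inv,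
    abs_neg, abs_of_pos Real.two_pi_pos, real_smul]
  push_cast
  field_simp

noncomputable def logit (y : ℝ) : ℝ := Real.log y - Real.log (1 - y)

theorem logit_image_Ioo : logit '' Ioo 0 1 = univ := by
  refine eq_univ_of_forall fun u ↦ ⟨Real.exp u / (1 + Real.exp u), ⟨by positivity, ?_⟩, ?_⟩
  · rw [div_lt_one (by positivity)]
    linarith
  · have hpos : 0 < 1 + Real.exp u := by positivity
    rw [logit, one_sub_div hpos.ne', add_sub_cancel_right, Real.log_div (by positivity) hpos.ne',
      Real.log_div (by positivity) hpos.ne', Real.log_exp, Real.log_one]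
    ring

theorem hasDerivAt_logit {y : ℝ} (hy : y ∈ Ioo 0 1) : HasDerivAt logit (y * (1 - y))⁻¹ y := by
  have h1 : 1 - y ≠ 0 := by linarith [hy.2]
  have hlog := ((hasDerivAt_id' y).const_sub 1).log h1
  refine ((Real.hasDerivAt_log hy.1.ne').sub hlog).congr_deriv ?_
  field_simp [hy.1.ne']
  ring

theorem strictMonoOn_logit : StrictMonoOn logit (Ioo 0 1) := fun a ha b hb hab ↦ by
  have := Real.log_lt_log ha.1 hab
  have := Real.log_lt_log (sub_pos.2 hb.2) (sub_lt_sub_left hab 1)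
  simp only [logit]
  linarith

section SubstLogit
variable {E : Type*} [NormedAddCommGroup E] [NormedSpace ℝ E]

theorem integrable_iff_integrableOn_Ioo_logit (g : ℝ → E) :
    Integrable g ↔ IntegrableOn (fun y ↦ (y * (1 - y))⁻¹ • g (logit y)) (Ioo 0 1) := by
  rw [← integrableOn_univ, ← logit_image_Ioo]
  exact integrableOn_image_iff_integrableOn_deriv_smul_of_monotoneOn measurableSet_Ioo
    (fun y hy ↦ (hasDerivAt_logit hy).hasDerivWithinAt) strictMonoOn_logit.monotoneOn g

theorem integral_eq_integral_Ioo_logit (g : ℝ → E) :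
    ∫ u, g u = ∫ y in Ioo 0 1, (y * (1 - y))⁻¹ • g (logit y) := by
  rw [← setIntegral_univ, ← logit_image_Ioo]
  exact integral_image_eq_integral_deriv_smul_of_monotoneOn measurableSet_Ioo
    (fun y hy ↦ (hasDerivAt_logit hy).hasDerivWithinAt) strictMonoOn_logit.monotoneOn g

end SubstLogit

noncomputable def halfSechPow (c u : ℝ) : ℝ := ((1 / 2) * (1 / Real.cosh (u / 2))) ^ c

theorem continuous_halfSechPow (c : ℝ) : Continuous (halfSechPow c) := by
  refine Continuous.rpow_const ?_ fun u ↦ Or.inl (by positivity)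
  exact continuous_const.mul (continuous_const.div (by fun_prop) fun u ↦ (Real.cosh_pos _).ne')

theorem half_mul_one_div_cosh_half_sub (a b : ℝ) :
    1 / 2 * (1 / Real.cosh ((a - b) / 2)) = Real.exp ((a + b) / 2) / (Real.exp a + Real.exp b) := by
  have ha : Real.exp a = Real.exp ((a + b) / 2) * Real.exp ((a - b) / 2) := by
    rw [← Real.exp_add]; ring_nf
  have hb : Real.exp b = Real.exp ((a + b) / 2) * Real.exp (-((a - b) / 2)) := by
    rw [← Real.exp_add]; ring_nf
  rw [Real.cosh_eq, ha, hb, ← mul_add]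
  field_simp

theorem halfSechPow_logit (c : ℝ) {y : ℝ} (hy : y ∈ Ioo 0 1) :
    halfSechPow c (logit y) = Real.exp (c / 2 * (Real.log y + Real.log (1 - y))) := by
  have h1 : 0 < 1 - y := sub_pos.2 hy.2
  rw [halfSechPow, logit, half_mul_one_div_cosh_half_sub, Real.exp_log hy.1, Real.exp_log h1,
    add_sub_cancel, div_one, ← Real.exp_mul]
  ring_nf

theorem inv_mul_smul_cexp_mul_halfSechPow_logit (c α : ℝ) {y : ℝ} (hy : y ∈ Ioo 0 1) :
    (y * (1 - y))⁻¹ • (cexp (α * logit y * I) * halfSechPow c (logit y))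
      = (y : ℂ) ^ (c / 2 + α * I - 1) * (1 - (y : ℂ)) ^ (c / 2 - α * I - 1) := by
  have h1 : 0 < 1 - y := sub_pos.2 hy.2
  have hjac : (y * (1 - y))⁻¹ = Real.exp (-(Real.log y + Real.log (1 - y))) := by
    rw [Real.exp_neg, Real.exp_add, Real.exp_log hy.1, Real.exp_log h1]
  have hlog1 : Complex.log (1 - (y : ℂ)) = (Real.log (1 - y) : ℂ) := by
    rw [ofReal_log h1.le]; push_cast; rfl
  rw [halfSechPow_logit c hy, hjac, real_smul, ofReal_exp, ofReal_exp,
    cpow_def_of_ne_zero (ofReal_ne_zero.2 hy.1.ne'), ← ofReal_log hy.1.le,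
    cpow_def_of_ne_zero (by exact_mod_cast h1.ne' : (1 - (y : ℂ)) ≠ 0), hlog1,
    ← Complex.exp_add, ← Complex.exp_add, ← Complex.exp_add]
  congr 1
  simp only [logit]
  push_cast
  ring

theorem integrable_cexp_mul_halfSechPow {c : ℝ} (hc : 0 < c) (α : ℝ) :
    Integrable (fun u : ℝ ↦ cexp (α * u * I) * halfSechPow c u) := by
  rw [integrable_iff_integrableOn_Ioo_logit,
    integrableOn_congr_fun (fun y hy ↦ inv_mul_smul_cexp_mul_halfSechPow_logit c α hy)
      measurableSet_Ioo, ← intervalIntegrable_iff_integrableOn_Ioo_of_le zero_le_one]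
  exact betaIntegral_convergent (by simpa using hc) (by simpa using hc)

theorem integral_cexp_mul_halfSechPow {c : ℝ} (hc : 0 < c) (α : ℝ) :
    ∫ u : ℝ, cexp (α * u * I) * halfSechPow c u
      = Gamma (c / 2 + α * I) * Gamma (c / 2 - α * I) / Gamma c := by
  have hΓ : Gamma c ≠ 0 := by
    rw [Gamma_ofReal]
    exact_mod_cast (Real.Gamma_pos_of_pos hc).ne'
  rw [integral_eq_integral_Ioo_logit,
    setIntegral_congr_fun measurableSet_Ioo
      (fun y hy ↦ inv_mul_smul_cexp_mul_halfSechPow_logit c α hy),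
    eq_div_iff hΓ, Gamma_mul_Gamma_eq_betaIntegral (by simpa using hc) (by simpa using hc),
    betaIntegral, intervalIntegral.integral_of_le zero_le_one, integral_Ioc_eq_integral_Ioo]
  ring_nf

theorem half_mul_one_div_cosh_half_log_div {s t : ℝ} (hs : 0 < s) (ht : 0 < t) :
    1 / 2 * (1 / Real.cosh (Real.log (t / s) / 2)) = √(s * t) / (s + t) := by
  rw [Real.log_div ht.ne' hs.ne', half_mul_one_div_cosh_half_sub, Real.exp_half, Real.exp_add,
    Real.exp_log hs, Real.exp_log ht, mul_comm, add_comm]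

theorem Complex.Gamma_mul_Gamma_conj (z : ℂ) :
    Gamma z * Gamma ((starRingEnd ℂ) z) = (‖Gamma z‖ ^ 2 : ℝ) := by
  rw [Gamma_conj, mul_conj, normSq_eq_norm_sq]

theorem fourier_halfSechPow {c : ℝ} (hc : 0 < c) (ξ : ℝ) :
    𝓕 (fun u ↦ (halfSechPow c u : ℂ)) ξ
      = ((‖Gamma (c / 2 + (-2 * Real.pi * ξ : ℝ) * I)‖ ^ 2 / Real.Gamma c : ℝ) : ℂ) := by
  have hconj : c / 2 - (-2 * Real.pi * ξ : ℝ) * I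
      = (starRingEnd ℂ) (c / 2 + (-2 * Real.pi * ξ : ℝ) * I) := by
    simp [map_ofNat]
  rw [Real.fourier_real_eq_integral_exp_smul, ofReal_div, ← Gamma_ofReal,
    ← Gamma_mul_Gamma_conj, ← hconj, ← integral_cexp_mul_halfSechPow hc]
  congr 1 with u
  rw [smul_eq_mul]
  push_cast
  ring_nf

theorem stmt2_general (s t c : ℝ) (hs : 0 < s) (ht : 0 < t)
    (hc : 0 < c) :
    (1 / (2 * Real.pi) : ℂ) *
        ∫ α : ℝ, ((‖Complex.Gamma (c / 2 + α * I)‖ ^ 2 / Real.Gamma c : ℝ) : ℂ) *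
          Complex.exp (-I * (Real.log (t / s)) * α)
      = (((1 / 2) * (1 / Real.cosh (Real.log (t / s) / 2))) ^ c : ℝ) ∧
    (((1 / 2) * (1 / Real.cosh (Real.log (t / s) / 2))) ^ c : ℝ)
      = ((Real.sqrt (s * t) / (s + t)) ^ c : ℝ) := by
  set H : ℝ → ℂ := fun u ↦ halfSechPow c u
  have hH : Integrable H := by simpa using integrable_cexp_mul_halfSechPow hc 0
  have hH_cont : Continuous H := continuous_ofReal.comp (continuous_halfSechPow c)
  have hFH : Integrable (𝓕 H) := integrable_fourier_of_nonneg hH hH_cont.continuousAt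
    fun ξ ↦ by rw [fourier_halfSechPow hc]; exact zero_le_real.2 (by positivity)
  refine ⟨?_, by rw [half_mul_one_div_cosh_half_log_div hs ht]⟩
  have hinv := integral_fourier_neg_div_two_pi_mul_cexp hH hFH hH_cont.continuousAt
    (x := Real.log (t / s))
  have hα (α : ℝ) : -2 * Real.pi * (-α / (2 * Real.pi)) = α := by field_simp
  simp only [H, fourier_halfSechPow hc, hα] at hinv
  exact hinv

/-- For `0 < s, t < 1` and `c > 0`,
`(1/(2π)) ∫_ℝ |Γ(c/2 + iα)|²/Γ(c) · e^{-i ln(t/s) α} dα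
  = ((1/2) sech(ln(t/s)/2))^c = (√(st)/(s+t))^c`. -/
theorem stmt2 (s t c : ℝ) (hs : 0 < s) (hs1 : s < 1) (ht : 0 < t) (ht1 : t < 1)
    (hc : 0 < c) :
    (1 / (2 * Real.pi) : ℂ) *
        ∫ α : ℝ, ((‖Complex.Gamma (c / 2 + α * I)‖ ^ 2 / Real.Gamma c : ℝ) : ℂ) *
          Complex.exp (-I * (Real.log (t / s)) * α)
      = (((1 / 2) * (1 / Real.cosh (Real.log (t / s) / 2))) ^ c : ℝ) ∧
    (((1 / 2) * (1 / Real.cosh (Real.log (t / s) / 2))) ^ c : ℝ)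
      = ((Real.sqrt (s * t) / (s + t)) ^ c : ℝ) :=
  stmt2_general s t c hs ht hc
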